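/- Let ρ_X be a 3×3 qutrit density matrix whose only nonzero off-diagonal entries are a_{13} in position (1,3) and its conjugate in position (3,1). Then for every diagonal density matrix δ, ‖ρ_X − δ‖_tr ≥ ‖ρ_X − ρ_diag‖_tr = 2|a_{13}|, where ρ_diag is the diagonal part of ρ_X. Hence the optimal incoherent state for the trace-norm coherence of ρ_X is ρ_diag, and C_tr(ρ_X) = 2|a_{13}|. -/

import Mathlib

open Matrix Complex ComplexOrder

noncomputable def matSqrt {n : Type*} [Fintype n] [DecidableEq n]
    (A : Matrix n n ℂ) : Matrix n n ℂ :=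
  open Classical in
  if h : A.PosSemidef then
    h.1.eigenvectorUnitary.1 * diagonal ((↑) ∘ (Real.sqrt ·) ∘ h.1.eigenvalues) *
      (star h.1.eigenvectorUnitary : Matrix n n ℂ)
  else 0

noncomputable def fid {n : Type*} [Fintype n] [DecidableEq n]
    (ρ δ : Matrix n n ℂ) : ℝ :=
  ((matSqrt (matSqrt ρ * δ * matSqrt ρ)).trace).re ^ 2

noncomputable def traceNorm {n : Type*} [Fintype n] [DecidableEq n]
    (A : Matrix n n ℂ) : ℝ :=
  ((matSqrt (Aᴴ * A)).trace).re

def IsDensity {n : Type*} [Fintype n] [DecidableEq n] (ρ : Matrix n n ℂ) : Prop :=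
  ρ.PosSemidef ∧ ρ.trace = 1

noncomputable def qubit (rx ry rz : ℝ) : Matrix (Fin 2) (Fin 2) ℂ :=
  (1/2 : ℂ) • !![(1:ℂ) + rz, (rx : ℂ) - ry * I; (rx : ℂ) + ry * I, (1:ℂ) - rz]

set_option maxHeartbeats 1000000 in
lemma key (p d2 q : ℝ) (a13 : ℂ) :
    traceNorm !![(p:ℂ), 0, a13; 0, (d2:ℂ), 0; (starRingEnd ℂ) a13, 0, (q:ℂ)] =
      Real.sqrt (p^2 + q^2 + 2*Complex.normSq a13 + 2*|p*q - Complex.normSq a13|) + |d2| := by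
  have hm0 : 0 ≤ Complex.normSq a13 := Complex.normSq_nonneg _
  set m := Complex.normSq a13 with hm
  set D := |p*q - m| with hD
  have hD0 : 0 ≤ D := abs_nonneg _
  have hD2 : D^2 = (p*q - m)^2 := sq_abs _
  have ht0 : 0 ≤ p^2 + q^2 + 2*m + 2*D := by positivity
  set t : ℝ := p^2 + q^2 + 2*m + 2*D with ht
  set r := Real.sqrt t with hr
  have hr0 : 0 ≤ r := Real.sqrt_nonneg _
  have hrr : r^2 = t := Real.sq_sqrt ht0
  have hkey : (p^2+m+D)^2 + (p+q)^2*m = (p^2+m)*t := by linear_combination hD2 - (p^2+m)*ht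
  have hkey3 : (p+q)^2*m + (q^2+m+D)^2 = (q^2+m)*t := by linear_combination hD2 - (q^2+m)*ht
  have L1 : ((p^2+m+D)*r⁻¹)*((p^2+m+D)*r⁻¹) + (((p+q)*r⁻¹)*((p+q)*r⁻¹))*m = p^2+m := by
    rcases eq_or_lt_of_le ht0 with h0 | hpos
    · have hp : p = 0 := by
        have : p^2 = 0 := by linarith [sq_nonneg p, sq_nonneg q]
        exact pow_eq_zero_iff two_ne_zero |>.mp this
      have hmz : m = 0 := by linarith [sq_nonneg p, sq_nonneg q]
      have hDz : D = 0 := by linarith [sq_nonneg p, sq_nonneg q]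
      simp [hp, hmz, hDz]
    · have hrpos : 0 < r := Real.sqrt_pos.mpr hpos
      have hrt : r * r = t := by rw [← hrr]; ring
      have hrinv : t * (r⁻¹ * r⁻¹) = 1 := by rw [← hrt]; field_simp
      linear_combination (r⁻¹*r⁻¹)*hkey + (p^2+m)*hrinv
  have L3 : (((p+q)*r⁻¹)*((p+q)*r⁻¹))*m + ((q^2+m+D)*r⁻¹)*((q^2+m+D)*r⁻¹) = q^2+m := by
    rcases eq_or_lt_of_le ht0 with h0 | hpos
    · have hq : q = 0 := by
        have : q^2 = 0 := by linarith [sq_nonneg p, sq_nonneg q]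
        exact pow_eq_zero_iff two_ne_zero |>.mp this
      have hmz : m = 0 := by linarith [sq_nonneg p, sq_nonneg q]
      have hDz : D = 0 := by linarith [sq_nonneg p, sq_nonneg q]
      simp [hq, hmz, hDz]
    · have hrpos : 0 < r := Real.sqrt_pos.mpr hpos
      have hrt : r * r = t := by rw [← hrr]; ring
      have hrinv : t * (r⁻¹ * r⁻¹) = 1 := by rw [← hrt]; field_simp
      linear_combination (r⁻¹*r⁻¹)*hkey3 + (q^2+m)*hrinv
  have L2 : ((p^2+m+D)*r⁻¹)*((p+q)*r⁻¹) + ((p+q)*r⁻¹)*((q^2+m+D)*r⁻¹) = p+q := by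
    rcases eq_or_lt_of_le ht0 with h0 | hpos
    · have hp : p = 0 := by
        have : p^2 = 0 := by linarith [sq_nonneg p, sq_nonneg q]
        exact pow_eq_zero_iff two_ne_zero |>.mp this
      have hq : q = 0 := by
        have : q^2 = 0 := by linarith [sq_nonneg p, sq_nonneg q]
        exact pow_eq_zero_iff two_ne_zero |>.mp this
      simp [hp, hq]
    · have hrpos : 0 < r := Real.sqrt_pos.mpr hpos
      have hrt : r * r = t := by rw [← hrr]; ring
      have hrinv : t * (r⁻¹ * r⁻¹) = 1 := by rw [← hrt]; field_simp
      linear_combination (p+q)*hrinv - (p+q)*(r⁻¹*r⁻¹)*ht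
  have L4 : (p^2+m+D)*r⁻¹ + (q^2+m+D)*r⁻¹ = r := by
    have h2 : (p^2+m+D)*r⁻¹ + (q^2+m+D)*r⁻¹ = t / r := by rw [ht]; ring
    rw [h2, hr, Real.div_sqrt]
  set A : Matrix (Fin 3) (Fin 3) ℂ :=
    !![(p:ℂ), 0, a13; 0, (d2:ℂ), 0; (starRingEnd ℂ) a13, 0, (q:ℂ)] with hA
  have hMpsd : (Aᴴ * A).PosSemidef := posSemidef_conjTranspose_mul_self A
  have hconj : a13 * (starRingEnd ℂ) a13 = ((m:ℝ):ℂ) := by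
    rw [Complex.mul_conj]
  set S : Matrix (Fin 3) (Fin 3) ℂ :=
    !![(((p^2+m+D)*r⁻¹ : ℝ):ℂ), 0, ((((p+q)*r⁻¹ : ℝ)):ℂ) * a13;
       0, ((|d2| : ℝ) : ℂ), 0;
       ((((p+q)*r⁻¹ : ℝ)):ℂ) * (starRingEnd ℂ) a13, 0, (((q^2+m+D)*r⁻¹ : ℝ):ℂ)] with hS
  -- S is positive semidefinite
  set c : ℝ := Real.sqrt r⁻¹ with hc
  have hc2 : ((c:ℂ)) * ((c:ℂ)) = ((r:ℂ))⁻¹ := by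
    rw [← Complex.ofReal_mul, Real.mul_self_sqrt (by positivity : (0:ℝ) ≤ r⁻¹),
      Complex.ofReal_inv]
  set A' : Matrix (Fin 3) (Fin 3) ℂ :=
    !![(p:ℂ), 0, a13; 0, 0, 0; (starRingEnd ℂ) a13, 0, (q:ℂ)] with hA'
  set g : Fin 3 → ℂ := ![((D*r⁻¹ : ℝ) : ℂ), ((|d2| : ℝ) : ℂ), ((D*r⁻¹ : ℝ) : ℂ)] with hg
  have hdec : S = ((c:ℂ) • A')ᴴ * ((c:ℂ) • A') + Matrix.diagonal g := by
    ext i j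
    fin_cases i <;> fin_cases j <;>
      simp [hS, hA', hg, Matrix.mul_apply, Fin.sum_univ_three, Matrix.diagonal,
        Complex.conj_ofReal]
    · push_cast
      linear_combination (-(p:ℂ)*(p:ℂ))*hc2 - ((c:ℂ)*(c:ℂ))*hconj - ((m:ℝ):ℂ)*hc2
    · push_cast
      linear_combination (-((p:ℂ)+(q:ℂ))*a13)*hc2
    · push_cast
      linear_combination (-((p:ℂ)+(q:ℂ))*(starRingEnd ℂ) a13)*hc2
    · push_cast
      linear_combination (-(q:ℂ)*(q:ℂ))*hc2 - ((c:ℂ)*(c:ℂ))*hconj - ((m:ℝ):ℂ)*hc2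
  have hSpsd : S.PosSemidef := by
    rw [hdec]
    refine (posSemidef_conjTranspose_mul_self _).add (Matrix.PosSemidef.diagonal ?_)
    intro i
    fin_cases i <;>
      refine Complex.zero_le_real.mpr (by positivity)
  have L1C := congrArg (fun x : ℝ => (x:ℂ)) L1
  have L2C := congrArg (fun x : ℝ => (x:ℂ)) L2
  have L3C := congrArg (fun x : ℝ => (x:ℂ)) L3
  push_cast at L1C L2C L3C
  have habs2 := congrArg (fun x : ℝ => (x:ℂ)) (abs_mul_abs_self d2)
  push_cast at habs2
  have hS2 : S ^ 2 = Aᴴ * A := by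
    rw [pow_two]
    ext i j
    fin_cases i <;> fin_cases j <;>
      simp [hS, hA, Matrix.mul_apply, Fin.sum_univ_three, Complex.conj_ofReal]
    · push_cast
      linear_combination L1C + ((((p:ℂ)+(q:ℂ))*((r:ℂ))⁻¹)^2 - 1)*hconj
    · push_cast
      linear_combination a13 * L2C
    · push_cast
      linear_combination habs2
    · push_cast
      linear_combination (starRingEnd ℂ) a13 * L2C
    · push_cast
      linear_combination L3C + ((((p:ℂ)+(q:ℂ))*((r:ℂ))⁻¹)^2 - 1)*hconj
  have hsqrt : matSqrt (Aᴴ * A) = S := by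
    rw [matSqrt, dif_pos hMpsd]
    open scoped MatrixOrder in
    have e : hMpsd.1.eigenvectorUnitary.1 * diagonal ((↑) ∘ (Real.sqrt ·) ∘ hMpsd.1.eigenvalues) *
        (star hMpsd.1.eigenvectorUnitary : Matrix (Fin 3) (Fin 3) ℂ) = cfc Real.sqrt (Aᴴ * A) := by
      rw [hMpsd.1.cfc_eq, IsHermitian.cfc, Unitary.conjStarAlgAut_apply]; rfl
    open scoped MatrixOrder in
    have e2 := CFC.sqrt_eq_real_sqrt (Aᴴ * A) hMpsd.nonneg
    open scoped MatrixOrder in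
    rw [cfcₙ_eq_cfc] at e2
    open scoped MatrixOrder in
    rw [e, ← e2, ← hS2, CFC.sqrt_sq S hSpsd.nonneg]
  rw [traceNorm, hsqrt, hS]
  simp [Matrix.trace, Fin.sum_univ_three, ← Complex.ofReal_pow]
  linarith [L4]

/-- For the qutrit X-state ρ_X (only off-diagonal entries at (1,3) and (3,1)),
the closest diagonal density matrix in trace norm is the diagonal part ρ_diag,
and C_tr(ρ_X) = 2|a₁₃|. -/
theorem traceNorm_coherence_qutrit_X (a11 a22 a33 : ℝ) (a13 : ℂ)
    (hρ : IsDensity !![(a11 : ℂ), 0, a13; 0, (a22 : ℂ), 0; starRingEnd ℂ a13, 0, (a33 : ℂ)]) :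
    (∀ δ : Matrix (Fin 3) (Fin 3) ℂ, IsDensity δ → δ.IsDiag →
      traceNorm (!![(a11 : ℂ), 0, a13; 0, (a22 : ℂ), 0; starRingEnd ℂ a13, 0, (a33 : ℂ)] - δ) ≥
        2 * ‖a13‖) ∧
    traceNorm (!![(a11 : ℂ), 0, a13; 0, (a22 : ℂ), 0; starRingEnd ℂ a13, 0, (a33 : ℂ)] -
        !![(a11 : ℂ), 0, 0; 0, (a22 : ℂ), 0; 0, 0, (a33 : ℂ)]) = 2 * ‖a13‖ ∧
    IsLeast {t : ℝ | ∃ δ : Matrix (Fin 3) (Fin 3) ℂ, IsDensity δ ∧ δ.IsDiag ∧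
        t = traceNorm (!![(a11 : ℂ), 0, a13; 0, (a22 : ℂ), 0;
            starRingEnd ℂ a13, 0, (a33 : ℂ)] - δ)}
      (2 * ‖a13‖) := by
  have hm0 : 0 ≤ Complex.normSq a13 := Complex.normSq_nonneg _
  have habs : 2 * ‖a13‖ = Real.sqrt (4 * Complex.normSq a13) := by
    rw [show (4:ℝ) * Complex.normSq a13 = (2 * ‖a13‖)^2 by
      rw [mul_pow, Complex.sq_norm]; ring]
    rw [Real.sqrt_sq (by positivity)]
  have hineq : ∀ p d2 q : ℝ,
      Real.sqrt (p^2 + q^2 + 2*Complex.normSq a13 + 2*|p*q - Complex.normSq a13|) + |d2| ≥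
        2 * ‖a13‖ := by
    intro p d2 q
    have h1 : 4 * Complex.normSq a13 ≤
        p^2 + q^2 + 2*Complex.normSq a13 + 2*|p*q - Complex.normSq a13| := by
      nlinarith [neg_abs_le (p*q - Complex.normSq a13), sq_nonneg (p - q)]
    calc 2 * ‖a13‖ = Real.sqrt (4 * Complex.normSq a13) := habs
      _ ≤ Real.sqrt (p^2 + q^2 + 2*Complex.normSq a13 + 2*|p*q - Complex.normSq a13|) :=
          Real.sqrt_le_sqrt h1
      _ ≤ _ := by simp [abs_nonneg]
  have part1 : ∀ δ : Matrix (Fin 3) (Fin 3) ℂ, IsDensity δ → δ.IsDiag →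
      traceNorm (!![(a11 : ℂ), 0, a13; 0, (a22 : ℂ), 0; starRingEnd ℂ a13, 0, (a33 : ℂ)] - δ) ≥
        2 * ‖a13‖ := by
    intro δ hδ hδdiag
    have hherm : δ.IsHermitian := hδ.1.1
    have hreal : ∀ i, δ i i = (((δ i i).re : ℝ) : ℂ) := fun i => (hherm.coe_re_apply_self i).symm
    obtain ⟨x0, hx0⟩ : ∃ x : ℝ, δ 0 0 = (x:ℂ) := ⟨(δ 0 0).re, hreal 0⟩
    obtain ⟨x1, hx1⟩ : ∃ x : ℝ, δ 1 1 = (x:ℂ) := ⟨(δ 1 1).re, hreal 1⟩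
    obtain ⟨x2, hx2⟩ : ∃ x : ℝ, δ 2 2 = (x:ℂ) := ⟨(δ 2 2).re, hreal 2⟩
    have hδeq : Matrix.diagonal (Matrix.diag δ) = δ := hδdiag.diagonal_diag
    have hmat : !![(a11 : ℂ), 0, a13; 0, (a22 : ℂ), 0; starRingEnd ℂ a13, 0, (a33 : ℂ)] - δ =
        !![((a11 - x0 : ℝ) : ℂ), 0, a13;
           0, ((a22 - x1 : ℝ) : ℂ), 0;
           (starRingEnd ℂ) a13, 0, ((a33 - x2 : ℝ) : ℂ)] := by
      rw [← hδeq]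
      ext i j
      fin_cases i <;> fin_cases j <;>
        simp [Matrix.sub_apply, Matrix.diagonal, Matrix.diag, hx0, hx1, hx2] <;>
        push_cast <;> ring
    rw [hmat, key]
    exact hineq _ _ _
  have part2 : traceNorm (!![(a11 : ℂ), 0, a13; 0, (a22 : ℂ), 0; starRingEnd ℂ a13, 0, (a33 : ℂ)] -
      !![(a11 : ℂ), 0, 0; 0, (a22 : ℂ), 0; 0, 0, (a33 : ℂ)]) = 2 * ‖a13‖ := by
    have hmat : !![(a11 : ℂ), 0, a13; 0, (a22 : ℂ), 0; starRingEnd ℂ a13, 0, (a33 : ℂ)] -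
        !![(a11 : ℂ), 0, 0; 0, (a22 : ℂ), 0; 0, 0, (a33 : ℂ)] =
        !![((0:ℝ):ℂ), 0, a13; 0, ((0:ℝ):ℂ), 0; (starRingEnd ℂ) a13, 0, ((0:ℝ):ℂ)] := by
      ext i j
      fin_cases i <;> fin_cases j <;> simp <;> try rfl
    rw [hmat, key]
    rw [show (0:ℝ)^2 + (0:ℝ)^2 + 2*Complex.normSq a13 + 2*|(0:ℝ)*0 - Complex.normSq a13| =
        4 * Complex.normSq a13 by rw [abs_of_nonpos (by linarith)]; ring]
    rw [← habs]
    simp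
  refine ⟨part1, part2, ?_, ?_⟩
  · exact ⟨!![(a11 : ℂ), 0, 0; 0, (a22 : ℂ), 0; 0, 0, (a33 : ℂ)],
      ⟨⟨by
        have hd : !![(a11 : ℂ), 0, 0; 0, (a22 : ℂ), 0; 0, 0, (a33 : ℂ)] =
            Matrix.diagonal ![(a11:ℂ), (a22:ℂ), (a33:ℂ)] := by
          ext i j
          fin_cases i <;> fin_cases j <;> simp [Matrix.diagonal] <;> try rfl
        rw [hd]
        refine Matrix.PosSemidef.diagonal ?_
        have h0 := hρ.1.diag_nonneg (i := 0)
        have h1 := hρ.1.diag_nonneg (i := 1)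
        have h2 := hρ.1.diag_nonneg (i := 2)
        simp [dotProduct, Matrix.mulVec, Fin.sum_univ_three, Pi.single_apply] at h0 h1 h2
        intro i
        fin_cases i <;> simpa using ‹_›
        , by
        have := hρ.2
        simp [Matrix.trace, Fin.sum_univ_three] at this ⊢
        exact this⟩,
       fun i j hij => by fin_cases i <;> fin_cases j <;> first | rfl | simp_all,
       part2.symm⟩⟩
  · rintro x ⟨δ, hδ, hδdiag, rfl⟩
    exact part1 δ hδ hδdiag
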